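/- Let H = A #_ψ^φ B be a cross product bialgebra over a commutative ring k. If the identity map of A has a convolution inverse S : A → A (in Hom(A,A) with convolution from the coalgebra A and algebra A) and the identity map of B has a convolution inverse s : B → B, then H is a Hopf algebra with antipode given by 𝒮 = ψ ∘ (s ⊗ S) ∘ φ : A⊗B → A⊗B; that is, 𝒮(a⊗b) = ψ((s⊗S)(φ(a⊗b))) satisfies the antipode axioms Σ 𝒮(h₁)h₂ = ε(h)1 = Σ h₁𝒮(h₂) for all h ∈ H. -/

import Mathlib

open TensorProduct

variable {k A B : Type*} [CommRing k] [Ring A] [Ring B] [Algebra k A] [Algebra k B]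
  [Coalgebra k A] [Coalgebra k B]

/-- The cross product multiplication on `A ⊗ B` induced by `ψ : B ⊗ A → A ⊗ B`. -/
noncomputable def crossMul (ψ : B ⊗[k] A →ₗ[k] A ⊗[k] B) :
    (A ⊗[k] B) ⊗[k] (A ⊗[k] B) →ₗ[k] A ⊗[k] B :=
  TensorProduct.map (LinearMap.mul' k A) (LinearMap.mul' k B) ∘ₗ
    (TensorProduct.assoc k (A ⊗[k] A) B B).toLinearMap ∘ₗ
    TensorProduct.map
      ((TensorProduct.assoc k A A B).symm.toLinearMap ∘ₗ
        TensorProduct.map (LinearMap.id : A →ₗ[k] A) ψ ∘ₗ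
        (TensorProduct.assoc k A B A).toLinearMap)
      (LinearMap.id : B →ₗ[k] B) ∘ₗ
    (TensorProduct.assoc k (A ⊗[k] B) A B).symm.toLinearMap

/-- (a): `ψ ∘ (m_B ⊗ id_A) = (id_A ⊗ m_B) ∘ (ψ ⊗ id_B) ∘ (id_B ⊗ ψ)`. -/
def psiCondA (ψ : B ⊗[k] A →ₗ[k] A ⊗[k] B) : Prop :=
  ψ ∘ₗ TensorProduct.map (LinearMap.mul' k B) (LinearMap.id : A →ₗ[k] A) =
    TensorProduct.map (LinearMap.id : A →ₗ[k] A) (LinearMap.mul' k B) ∘ₗ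
      (TensorProduct.assoc k A B B).toLinearMap ∘ₗ
      TensorProduct.map ψ (LinearMap.id : B →ₗ[k] B) ∘ₗ
      (TensorProduct.assoc k B A B).symm.toLinearMap ∘ₗ
      TensorProduct.map (LinearMap.id : B →ₗ[k] B) ψ ∘ₗ
      (TensorProduct.assoc k B B A).toLinearMap

/-- (b): `ψ ∘ (id_B ⊗ m_A) = (m_A ⊗ id_B) ∘ (id_A ⊗ ψ) ∘ (ψ ⊗ id_A)`. -/
def psiCondB (ψ : B ⊗[k] A →ₗ[k] A ⊗[k] B) : Prop :=
  ψ ∘ₗ TensorProduct.map (LinearMap.id : B →ₗ[k] B) (LinearMap.mul' k A) =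
    TensorProduct.map (LinearMap.mul' k A) (LinearMap.id : B →ₗ[k] B) ∘ₗ
      (TensorProduct.assoc k A A B).symm.toLinearMap ∘ₗ
      TensorProduct.map (LinearMap.id : A →ₗ[k] A) ψ ∘ₗ
      (TensorProduct.assoc k A B A).toLinearMap ∘ₗ
      TensorProduct.map ψ (LinearMap.id : A →ₗ[k] A) ∘ₗ
      (TensorProduct.assoc k B A A).symm.toLinearMap

/-- (c): `ψ(b ⊗ 1_A) = 1_A ⊗ b`. -/
def psiCondC (ψ : B ⊗[k] A →ₗ[k] A ⊗[k] B) : Prop :=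
  ∀ b : B, ψ (b ⊗ₜ[k] (1 : A)) = (1 : A) ⊗ₜ[k] b

/-- (d): `ψ(1_B ⊗ a) = a ⊗ 1_B`. -/
def psiCondD (ψ : B ⊗[k] A →ₗ[k] A ⊗[k] B) : Prop :=
  ∀ a : A, ψ ((1 : B) ⊗ₜ[k] a) = a ⊗ₜ[k] (1 : B)

/-- The cross coproduct comultiplication on `A ⊗ B` induced by `φ : A ⊗ B → B ⊗ A`. -/
noncomputable def crossComul (φ : A ⊗[k] B →ₗ[k] B ⊗[k] A) :
    A ⊗[k] B →ₗ[k] (A ⊗[k] B) ⊗[k] (A ⊗[k] B) :=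
  (TensorProduct.assoc k (A ⊗[k] B) A B).toLinearMap ∘ₗ
    TensorProduct.map
      ((TensorProduct.assoc k A B A).symm.toLinearMap ∘ₗ
        TensorProduct.map (LinearMap.id : A →ₗ[k] A) φ ∘ₗ
        (TensorProduct.assoc k A A B).toLinearMap)
      (LinearMap.id : B →ₗ[k] B) ∘ₗ
    (TensorProduct.assoc k (A ⊗[k] A) B B).symm.toLinearMap ∘ₗ
    TensorProduct.map (Coalgebra.comul (R := k) (A := A)) (Coalgebra.comul (R := k) (A := B))

/-- The counit `ε_A ⊗ ε_B` on `A ⊗ B`. -/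
noncomputable def crossCounit : A ⊗[k] B →ₗ[k] k :=
  (TensorProduct.lid k k).toLinearMap ∘ₗ
    TensorProduct.map (Coalgebra.counit (R := k) (A := A)) (Coalgebra.counit (R := k) (A := B))

/-- (a): `(Δ_B ⊗ id_A) ∘ φ = (id_B ⊗ φ) ∘ (φ ⊗ id_B) ∘ (id_A ⊗ Δ_B)`. -/
def phiCondA (φ : A ⊗[k] B →ₗ[k] B ⊗[k] A) : Prop :=
  TensorProduct.map (Coalgebra.comul (R := k) (A := B)) (LinearMap.id : A →ₗ[k] A) ∘ₗ φ =
    (TensorProduct.assoc k B B A).symm.toLinearMap ∘ₗ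
      TensorProduct.map (LinearMap.id : B →ₗ[k] B) φ ∘ₗ
      (TensorProduct.assoc k B A B).toLinearMap ∘ₗ
      TensorProduct.map φ (LinearMap.id : B →ₗ[k] B) ∘ₗ
      (TensorProduct.assoc k A B B).symm.toLinearMap ∘ₗ
      TensorProduct.map (LinearMap.id : A →ₗ[k] A) (Coalgebra.comul (R := k) (A := B))

/-- (b): `(id_B ⊗ Δ_A) ∘ φ = (φ ⊗ id_A) ∘ (id_A ⊗ φ) ∘ (Δ_A ⊗ id_B)`. -/
def phiCondB (φ : A ⊗[k] B →ₗ[k] B ⊗[k] A) : Prop :=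
  TensorProduct.map (LinearMap.id : B →ₗ[k] B) (Coalgebra.comul (R := k) (A := A)) ∘ₗ φ =
    (TensorProduct.assoc k B A A).toLinearMap ∘ₗ
      TensorProduct.map φ (LinearMap.id : A →ₗ[k] A) ∘ₗ
      (TensorProduct.assoc k A B A).symm.toLinearMap ∘ₗ
      TensorProduct.map (LinearMap.id : A →ₗ[k] A) φ ∘ₗ
      (TensorProduct.assoc k A A B).toLinearMap ∘ₗ
      TensorProduct.map (Coalgebra.comul (R := k) (A := A)) (LinearMap.id : B →ₗ[k] B)

/-- (c): `(id_B ⊗ ε_A) ∘ φ = ε_A ⊗ id_B`. -/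
def phiCondC (φ : A ⊗[k] B →ₗ[k] B ⊗[k] A) : Prop :=
  (TensorProduct.rid k B).toLinearMap ∘ₗ
      TensorProduct.map (LinearMap.id : B →ₗ[k] B) (Coalgebra.counit (R := k) (A := A)) ∘ₗ φ =
    (TensorProduct.lid k B).toLinearMap ∘ₗ
      TensorProduct.map (Coalgebra.counit (R := k) (A := A)) (LinearMap.id : B →ₗ[k] B)

/-- (d): `(ε_B ⊗ id_A) ∘ φ = id_A ⊗ ε_B`. -/
def phiCondD (φ : A ⊗[k] B →ₗ[k] B ⊗[k] A) : Prop :=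
  (TensorProduct.lid k A).toLinearMap ∘ₗ
      TensorProduct.map (Coalgebra.counit (R := k) (A := B)) (LinearMap.id : A →ₗ[k] A) ∘ₗ φ =
    (TensorProduct.rid k A).toLinearMap ∘ₗ
      TensorProduct.map (LinearMap.id : A →ₗ[k] A) (Coalgebra.counit (R := k) (A := B))

/-- `A ⊗ B` with the cross product multiplication induced by `ψ`, unit `1 ⊗ 1`, the cross
coproduct comultiplication induced by `φ` and counit `ε_A ⊗ ε_B` is a bialgebra. -/
def IsCrossBialgebra (ψ : B ⊗[k] A →ₗ[k] A ⊗[k] B) (φ : A ⊗[k] B →ₗ[k] B ⊗[k] A) : Prop :=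
  (∀ x y z : A ⊗[k] B,
      crossMul ψ (crossMul ψ (x ⊗ₜ[k] y) ⊗ₜ[k] z) =
        crossMul ψ (x ⊗ₜ[k] crossMul ψ (y ⊗ₜ[k] z))) ∧
  (∀ x : A ⊗[k] B, crossMul ψ (((1 : A) ⊗ₜ[k] (1 : B)) ⊗ₜ[k] x) = x) ∧
  (∀ x : A ⊗[k] B, crossMul ψ (x ⊗ₜ[k] ((1 : A) ⊗ₜ[k] (1 : B))) = x) ∧
  ((TensorProduct.assoc k (A ⊗[k] B) (A ⊗[k] B) (A ⊗[k] B)).toLinearMap ∘ₗ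
      TensorProduct.map (crossComul φ) (LinearMap.id : A ⊗[k] B →ₗ[k] A ⊗[k] B) ∘ₗ
        crossComul φ =
      TensorProduct.map (LinearMap.id : A ⊗[k] B →ₗ[k] A ⊗[k] B) (crossComul φ) ∘ₗ
        crossComul φ) ∧
  ((TensorProduct.lid k (A ⊗[k] B)).toLinearMap ∘ₗ
      TensorProduct.map (crossCounit (k := k) (A := A) (B := B))
        (LinearMap.id : A ⊗[k] B →ₗ[k] A ⊗[k] B) ∘ₗ crossComul φ = LinearMap.id) ∧
  ((TensorProduct.rid k (A ⊗[k] B)).toLinearMap ∘ₗ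
      TensorProduct.map (LinearMap.id : A ⊗[k] B →ₗ[k] A ⊗[k] B)
        (crossCounit (k := k) (A := A) (B := B)) ∘ₗ crossComul φ = LinearMap.id) ∧
  (crossComul φ ((1 : A) ⊗ₜ[k] (1 : B)) =
      ((1 : A) ⊗ₜ[k] (1 : B)) ⊗ₜ[k] ((1 : A) ⊗ₜ[k] (1 : B))) ∧
  (crossCounit (k := k) (A := A) (B := B) ((1 : A) ⊗ₜ[k] (1 : B)) = 1) ∧
  (crossComul φ ∘ₗ crossMul ψ =
      TensorProduct.map (crossMul ψ) (crossMul ψ) ∘ₗ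
        (TensorProduct.tensorTensorTensorComm k (A ⊗[k] B) (A ⊗[k] B) (A ⊗[k] B)
          (A ⊗[k] B)).toLinearMap ∘ₗ
        TensorProduct.map (crossComul φ) (crossComul φ)) ∧
  (crossCounit (k := k) (A := A) (B := B) ∘ₗ crossMul ψ =
      LinearMap.mul' k k ∘ₗ
        TensorProduct.map (crossCounit (k := k) (A := A) (B := B))
          (crossCounit (k := k) (A := A) (B := B)))


/-!
The convolution product `f * g = m ∘ (f ⊗ g) ∘ Δ` on `End(A ⊗ B)` is associative with unit
`ηε ⊗ ηε`, since `A ⊗ B` is a bialgebra. Its unit and counit axioms force `ψ(1 ⊗ a) = a ⊗ 1`,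
`ψ(b ⊗ 1) = 1 ⊗ b` and the compatibility of `φ` with `ε_A`, `ε_B`, which suffices to compute
four products: `f ↦ f ⊗ ηε` and `g ↦ ηε ⊗ g` are multiplicative for the convolutions of
`End(A)` and `End(B)`, `(id ⊗ ηε) * (ηε ⊗ id) = id`, and `(ηε ⊗ s) * (S ⊗ ηε) = ψ ∘ (s ⊗ S) ∘ φ`.
Hence
`ψ(s ⊗ S)φ * id = (ηε ⊗ s) * ((S ⊗ ηε) * (id ⊗ ηε)) * (ηε ⊗ id) = (ηε ⊗ s) * (ηε ⊗ id) = ηε ⊗ ηε`,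
and symmetrically on the other side.
-/

section Convolution

variable {R C D : Type*} [CommSemiring R] [AddCommMonoid C] [Module R C] [AddCommMonoid D]
  [Module R D]

/-- The convolution `f * g = μ ∘ (f ⊗ g) ∘ δ`, for bare linear maps `μ` and `δ`: the cross
product structure on `A ⊗ B` is not an `Algebra`/`Coalgebra` instance. -/
noncomputable def convolution (μ : D ⊗[R] D →ₗ[R] D) (δ : C →ₗ[R] C ⊗[R] C)
    (f g : C →ₗ[R] D) : C →ₗ[R] D :=
  μ ∘ₗ map f g ∘ₗ δ

theorem convolution_assoc {μ : D ⊗[R] D →ₗ[R] D} {δ : C →ₗ[R] C ⊗[R] C}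
    (hμ : ∀ x y z, μ (μ (x ⊗ₜ y) ⊗ₜ z) = μ (x ⊗ₜ μ (y ⊗ₜ z)))
    (hδ : (TensorProduct.assoc R C C C).toLinearMap ∘ₗ map δ LinearMap.id ∘ₗ δ =
      map LinearMap.id δ ∘ₗ δ)
    (f g h : C →ₗ[R] D) :
    convolution μ δ (convolution μ δ f g) h = convolution μ δ f (convolution μ δ g h) := by
  have hμ' : μ ∘ₗ map μ LinearMap.id =
      μ ∘ₗ map LinearMap.id μ ∘ₗ (TensorProduct.assoc R D D D).toLinearMap :=
    ext_threefold fun x y z => by simpa using hμ x y z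
  have hleft : map (convolution μ δ f g) h =
      map μ LinearMap.id ∘ₗ map (map f g) h ∘ₗ map δ LinearMap.id := by
    simp only [convolution, ← map_comp, LinearMap.comp_id, LinearMap.id_comp]
  have hright : map f (convolution μ δ g h) =
      map LinearMap.id μ ∘ₗ map f (map g h) ∘ₗ map LinearMap.id δ := by
    simp only [convolution, ← map_comp, LinearMap.comp_id, LinearMap.id_comp]
  calc convolution μ δ (convolution μ δ f g) h
      = (μ ∘ₗ map μ LinearMap.id) ∘ₗ map (map f g) h ∘ₗ map δ LinearMap.id ∘ₗ δ := by
        rw [convolution, hleft]; simp only [LinearMap.comp_assoc]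
    _ = μ ∘ₗ map LinearMap.id μ ∘ₗ map f (map g h) ∘ₗ
          (TensorProduct.assoc R C C C).toLinearMap ∘ₗ map δ LinearMap.id ∘ₗ δ := by
        rw [hμ']
        simp only [LinearMap.comp_assoc]
        rw [← LinearMap.comp_assoc _ (map (map f g) h), ← map_map_comp_assoc_eq,
          LinearMap.comp_assoc]
    _ = convolution μ δ f (convolution μ δ g h) := by
        rw [hδ, convolution, hright]; simp only [LinearMap.comp_assoc]

theorem convolution_unit_left {μ : D ⊗[R] D →ₗ[R] D} {δ : C →ₗ[R] C ⊗[R] C} {u : D}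
    {ε : C →ₗ[R] R} (hu : ∀ x, μ (u ⊗ₜ x) = x)
    (hε : (TensorProduct.lid R C).toLinearMap ∘ₗ map ε LinearMap.id ∘ₗ δ = LinearMap.id)
    (f : C →ₗ[R] D) :
    convolution μ δ (LinearMap.toSpanSingleton R D u ∘ₗ ε) f = f := by
  have hμ : μ ∘ₗ map (LinearMap.toSpanSingleton R D u ∘ₗ ε) f =
      f ∘ₗ (TensorProduct.lid R C).toLinearMap ∘ₗ map ε LinearMap.id :=
    TensorProduct.ext' fun x y => by simp [← smul_tmul', hu]
  rw [convolution, ← LinearMap.comp_assoc, hμ, LinearMap.comp_assoc, LinearMap.comp_assoc, hε,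
    LinearMap.comp_id]

end Convolution

section CrossProduct

variable (ψ : B ⊗[k] A →ₗ[k] A ⊗[k] B) (φ : A ⊗[k] B →ₗ[k] B ⊗[k] A)

omit [Coalgebra k A] [Coalgebra k B] in
theorem crossMul_tmul (a c : A) (b d : B) :
    crossMul ψ ((a ⊗ₜ b) ⊗ₜ (c ⊗ₜ d)) =
      map (LinearMap.mulLeft k a) (LinearMap.mulRight k d) (ψ (b ⊗ₜ c)) := by
  simp only [crossMul, LinearMap.coe_comp, LinearEquiv.coe_coe, Function.comp_apply,
    assoc_symm_tmul, map_tmul, LinearMap.id_coe, id_eq, assoc_tmul]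
  induction ψ (b ⊗ₜ c) using TensorProduct.induction_on with
  | zero => simp
  | tmul x y => simp
  | add x y hx hy => simp only [tmul_add, add_tmul, map_add, hx, hy]

omit [Coalgebra k A] [Coalgebra k B] in
theorem crossMul_map_map_comp_map_mk (fA gA : A →ₗ[k] A) (fB gB : B →ₗ[k] B) (x : A) (y : B) :
    crossMul ψ ∘ₗ map (map fA fB) (map gA gB) ∘ₗ map (mk k A B x) ((mk k A B).flip y) =
      map (LinearMap.mulLeft k (fA x)) (LinearMap.mulRight k (gB y)) ∘ₗ ψ ∘ₗ map fB gA :=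
  TensorProduct.ext' fun β α => by simp [crossMul_tmul]

/-- Sweedler form of the cross coproduct: `Δ(a ⊗ b) = ∑ a₁ ⊗ φ(a₂ ⊗ b₁) ⊗ b₂`. -/
theorem comp_crossComul_eq {M : Type*} [AddCommGroup M] [Module k M]
    (Θ : (A ⊗[k] B) ⊗[k] (A ⊗[k] B) →ₗ[k] M) (Θ' : (A ⊗[k] A) ⊗[k] (B ⊗[k] B) →ₗ[k] M)
    (h : ∀ x₁ x₂ y₁ y₂, Θ (map (mk k A B x₁) ((mk k A B).flip y₂) (φ (x₂ ⊗ₜ y₁))) =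
      Θ' ((x₁ ⊗ₜ x₂) ⊗ₜ (y₁ ⊗ₜ y₂))) :
    Θ ∘ₗ crossComul φ = Θ' ∘ₗ map Coalgebra.comul Coalgebra.comul := by
  rw [crossComul]
  simp only [← LinearMap.comp_assoc]
  congr 1
  refine ext_fourfold' fun x₁ x₂ y₁ y₂ => ?_
  rw [← h]
  simp only [LinearMap.coe_comp, LinearEquiv.coe_coe, Function.comp_apply, assoc_symm_tmul,
    map_tmul, assoc_tmul, LinearMap.id_coe, id_eq]
  congr 1
  induction φ (x₂ ⊗ₜ y₁) using TensorProduct.induction_on with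
  | zero => simp
  | tmul β α => simp
  | add t t' ht ht' => simp only [tmul_add, add_tmul, map_add, ht, ht']

theorem comp_crossComul_eq_of_counit {M : Type*} [AddCommGroup M] [Module k M]
    (Θ : (A ⊗[k] B) ⊗[k] (A ⊗[k] B) →ₗ[k] M) (G : B ⊗[k] A →ₗ[k] M)
    (h : ∀ x β α y, Θ ((x ⊗ₜ β) ⊗ₜ (α ⊗ₜ y)) =
      (Coalgebra.counit (R := k) x * Coalgebra.counit (R := k) y) • G (β ⊗ₜ α)) :
    Θ ∘ₗ crossComul φ = G ∘ₗ φ := by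
  rw [comp_crossComul_eq φ Θ (G ∘ₗ φ ∘ₗ map ((TensorProduct.lid k A).toLinearMap ∘ₗ
      Coalgebra.counit.rTensor A) ((TensorProduct.rid k B).toLinearMap ∘ₗ
        Coalgebra.counit.lTensor B))]
  · exact TensorProduct.ext' fun a b => by simp
  · intro x₁ x₂ y₁ y₂
    have hΘ : Θ ∘ₗ map (mk k A B x₁) ((mk k A B).flip y₂) =
        (Coalgebra.counit (R := k) x₁ * Coalgebra.counit (R := k) y₂) • G :=
      TensorProduct.ext' fun β α => by simp [h]
    have hφ := LinearMap.congr_fun hΘ (φ (x₂ ⊗ₜ y₁))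
    simp only [LinearMap.comp_apply, LinearMap.smul_apply] at hφ
    simp [hφ, ← smul_tmul', smul_smul, mul_comm]

theorem convolution_map_map {P : A ⊗[k] A →ₗ[k] A} {Q : B ⊗[k] B →ₗ[k] B}
    {fA gA : A →ₗ[k] A} {fB gB : B →ₗ[k] B}
    (h : ∀ x₁ x₂ y₁ y₂, map (LinearMap.mulLeft k (fA x₁)) (LinearMap.mulRight k (gB y₂))
      (ψ (map fB gA (φ (x₂ ⊗ₜ y₁)))) = P (x₁ ⊗ₜ x₂) ⊗ₜ Q (y₁ ⊗ₜ y₂)) :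
    convolution (crossMul ψ) (crossComul φ) (map fA fB) (map gA gB) =
      map (P ∘ₗ Coalgebra.comul) (Q ∘ₗ Coalgebra.comul) := by
  rw [convolution, ← LinearMap.comp_assoc, comp_crossComul_eq φ _ (map P Q), map_comp]
  intro x₁ x₂ y₁ y₂
  have hmul := LinearMap.congr_fun (crossMul_map_map_comp_map_mk ψ fA gA fB gB x₁ y₂)
    (φ (x₂ ⊗ₜ y₁))
  simp only [LinearMap.comp_apply] at hmul
  simpa [hmul] using h x₁ x₂ y₁ y₂

end CrossProduct

section Conditions

variable {ψ : B ⊗[k] A →ₗ[k] A ⊗[k] B} {φ : A ⊗[k] B →ₗ[k] B ⊗[k] A}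

omit [Coalgebra k A] [Coalgebra k B] in
theorem psiCondD_of_one_mul
    (h : ∀ x : A ⊗[k] B, crossMul ψ (((1 : A) ⊗ₜ[k] (1 : B)) ⊗ₜ[k] x) = x) : psiCondD ψ :=
  fun a => by simpa [crossMul_tmul] using h (a ⊗ₜ 1)

omit [Coalgebra k A] [Coalgebra k B] in
theorem psiCondC_of_mul_one
    (h : ∀ x : A ⊗[k] B, crossMul ψ (x ⊗ₜ[k] ((1 : A) ⊗ₜ[k] (1 : B))) = x) : psiCondC ψ :=
  fun b => by simpa [crossMul_tmul] using h (1 ⊗ₜ b)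

theorem phiCondD_of_counit_left
    (h : (TensorProduct.lid k (A ⊗[k] B)).toLinearMap ∘ₗ
      map (crossCounit (k := k) (A := A) (B := B)) LinearMap.id ∘ₗ crossComul φ =
        LinearMap.id) :
    phiCondD φ := by
  have key := comp_crossComul_eq_of_counit φ
    ((TensorProduct.rid k A).toLinearMap ∘ₗ map LinearMap.id Coalgebra.counit ∘ₗ
      (TensorProduct.lid k (A ⊗[k] B)).toLinearMap ∘ₗ map crossCounit LinearMap.id)
    ((TensorProduct.lid k A).toLinearMap ∘ₗ map Coalgebra.counit LinearMap.id)
    fun x β α y => by simp [crossCounit, smul_smul, mul_comm, mul_left_comm]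
  simp only [LinearMap.comp_assoc, h, LinearMap.comp_id] at key
  exact key.symm

theorem phiCondC_of_counit_right
    (h : (TensorProduct.rid k (A ⊗[k] B)).toLinearMap ∘ₗ
      map LinearMap.id (crossCounit (k := k) (A := A) (B := B)) ∘ₗ crossComul φ =
        LinearMap.id) :
    phiCondC φ := by
  have key := comp_crossComul_eq_of_counit φ
    ((TensorProduct.lid k B).toLinearMap ∘ₗ map Coalgebra.counit LinearMap.id ∘ₗ
      (TensorProduct.rid k (A ⊗[k] B)).toLinearMap ∘ₗ map LinearMap.id crossCounit)
    ((TensorProduct.rid k B).toLinearMap ∘ₗ map LinearMap.id Coalgebra.counit)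
    fun x β α y => by simp [crossCounit, smul_smul, mul_comm, mul_left_comm]
  simp only [LinearMap.comp_assoc, h, LinearMap.comp_id] at key
  exact key.symm

omit [Coalgebra k A] in
theorem phiCondD.map_unitCounit_apply (hφ : phiCondD φ) {M : Type*} [AddCommGroup M]
    [Module k M] (f : A →ₗ[k] M) (x : A) (y : B) :
    map (Algebra.linearMap k B ∘ₗ Coalgebra.counit) f (φ (x ⊗ₜ y)) =
      Coalgebra.counit (R := k) y • ((1 : B) ⊗ₜ[k] f x) := by
  have hsplit : map (Algebra.linearMap k B ∘ₗ Coalgebra.counit (R := k) (A := B)) f =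
      mk k B M 1 ∘ₗ f ∘ₗ (TensorProduct.lid k A).toLinearMap ∘ₗ
        map (Coalgebra.counit (R := k) (A := B)) LinearMap.id :=
    TensorProduct.ext' fun b a => by simp [Algebra.algebraMap_eq_smul_one, smul_tmul]
  have hxy := LinearMap.congr_fun hφ (x ⊗ₜ y)
  simp only [LinearMap.comp_apply, LinearEquiv.coe_coe, map_tmul, LinearMap.id_coe, id_eq,
    rid_tmul] at hxy
  simp [hsplit, hxy]

omit [Coalgebra k B] in
theorem phiCondC.map_unitCounit_apply (hφ : phiCondC φ) {M : Type*} [AddCommGroup M]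
    [Module k M] (g : B →ₗ[k] M) (x : A) (y : B) :
    map g (Algebra.linearMap k A ∘ₗ Coalgebra.counit) (φ (x ⊗ₜ y)) =
      Coalgebra.counit (R := k) x • (g y ⊗ₜ[k] (1 : A)) := by
  have hsplit : map g (Algebra.linearMap k A ∘ₗ Coalgebra.counit (R := k) (A := A)) =
      (mk k M A).flip 1 ∘ₗ g ∘ₗ (TensorProduct.rid k B).toLinearMap ∘ₗ
        map LinearMap.id (Coalgebra.counit (R := k) (A := A)) :=
    TensorProduct.ext' fun b a => by simp [Algebra.algebraMap_eq_smul_one]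
  have hxy := LinearMap.congr_fun hφ (x ⊗ₜ y)
  simp only [LinearMap.comp_apply, LinearEquiv.coe_coe, map_tmul, LinearMap.id_coe, id_eq,
    lid_tmul] at hxy
  simp [hsplit, hxy, smul_tmul']

end Conditions

section ConvolutionIdentities

variable {ψ : B ⊗[k] A →ₗ[k] A ⊗[k] B} {φ : A ⊗[k] B →ₗ[k] B ⊗[k] A}

theorem convolution_map_unitCounit_right (hψ : psiCondD ψ) (hφ : phiCondD φ)
    (f f' : A →ₗ[k] A) :
    convolution (crossMul ψ) (crossComul φ)
        (map f (Algebra.linearMap k B ∘ₗ Coalgebra.counit))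
        (map f' (Algebra.linearMap k B ∘ₗ Coalgebra.counit)) =
      map (LinearMap.mul' k A ∘ₗ map f f' ∘ₗ Coalgebra.comul)
        (Algebra.linearMap k B ∘ₗ Coalgebra.counit) := by
  rw [convolution_map_map ψ φ (P := LinearMap.mul' k A ∘ₗ map f f')
    (Q := Algebra.linearMap k B ∘ₗ Coalgebra.counit ∘ₗ (TensorProduct.rid k B).toLinearMap ∘ₗ
      Coalgebra.counit.lTensor B)]
  · congr 1
    ext b
    simp
  · intro x₁ x₂ y₁ y₂
    simp [hφ.map_unitCounit_apply, hψ _, Algebra.algebraMap_eq_smul_one, tmul_smul, smul_smul,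
      mul_comm]

theorem convolution_map_unitCounit_left (hψ : psiCondC ψ) (hφ : phiCondC φ)
    (g g' : B →ₗ[k] B) :
    convolution (crossMul ψ) (crossComul φ)
        (map (Algebra.linearMap k A ∘ₗ Coalgebra.counit) g)
        (map (Algebra.linearMap k A ∘ₗ Coalgebra.counit) g') =
      map (Algebra.linearMap k A ∘ₗ Coalgebra.counit)
        (LinearMap.mul' k B ∘ₗ map g g' ∘ₗ Coalgebra.comul) := by
  rw [convolution_map_map ψ φ (Q := LinearMap.mul' k B ∘ₗ map g g')
    (P := Algebra.linearMap k A ∘ₗ Coalgebra.counit ∘ₗ (TensorProduct.rid k A).toLinearMap ∘ₗ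
      Coalgebra.counit.lTensor A)]
  · congr 1
    ext a
    simp
  · intro x₁ x₂ y₁ y₂
    simp [hφ.map_unitCounit_apply, hψ _, Algebra.algebraMap_eq_smul_one, smul_tmul', smul_smul,
      mul_comm]

theorem convolution_map_id_unitCounit (hψ : psiCondD ψ) (hφ : phiCondD φ) :
    convolution (crossMul ψ) (crossComul φ)
        (map LinearMap.id (Algebra.linearMap k B ∘ₗ Coalgebra.counit))
        (map (Algebra.linearMap k A ∘ₗ Coalgebra.counit) LinearMap.id) =
      LinearMap.id := by
  rw [convolution_map_map ψ φ
    (P := (TensorProduct.rid k A).toLinearMap ∘ₗ Coalgebra.counit.lTensor A)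
    (Q := (TensorProduct.lid k B).toLinearMap ∘ₗ Coalgebra.counit.rTensor B)]
  · convert map_id (R := k) (M := A) (N := B) <;> ext <;> simp
  · intro x₁ x₂ y₁ y₂
    rw [hφ.map_unitCounit_apply, map_smul, hψ]
    simp [Algebra.algebraMap_eq_smul_one, smul_tmul', tmul_smul]

omit [Coalgebra k A] [Coalgebra k B] in
theorem map_mulLeft_algebraMap_mulRight_algebraMap (c d : k) :
    map (LinearMap.mulLeft k (algebraMap k A c)) (LinearMap.mulRight k (algebraMap k B d)) =
      (c * d) • LinearMap.id :=
  TensorProduct.ext' fun a b => by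
    simp [Algebra.algebraMap_eq_smul_one, smul_tmul', tmul_smul, smul_smul, mul_comm]

theorem convolution_map_unitCounit_map_unitCounit (g : B →ₗ[k] B) (f : A →ₗ[k] A) :
    convolution (crossMul ψ) (crossComul φ)
        (map (Algebra.linearMap k A ∘ₗ Coalgebra.counit) g)
        (map f (Algebra.linearMap k B ∘ₗ Coalgebra.counit)) =
      ψ ∘ₗ map g f ∘ₗ φ := by
  rw [convolution, ← LinearMap.comp_assoc, comp_crossComul_eq_of_counit φ _ (ψ ∘ₗ map g f),
    LinearMap.comp_assoc]
  intro x β α y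
  simp [crossMul_tmul, map_mulLeft_algebraMap_mulRight_algebraMap]

theorem map_unitCounit_unitCounit :
    map (Algebra.linearMap k A ∘ₗ Coalgebra.counit (R := k) (A := A))
        (Algebra.linearMap k B ∘ₗ Coalgebra.counit (R := k) (A := B)) =
      LinearMap.toSpanSingleton k (A ⊗[k] B) ((1 : A) ⊗ₜ[k] (1 : B)) ∘ₗ crossCounit :=
  TensorProduct.ext' fun a b => by
    simp [crossCounit, Algebra.algebraMap_eq_smul_one, smul_tmul', smul_smul, mul_comm]

end ConvolutionIdentities

theorem crossBialgebra_hopf_of_convInvertible (ψ : B ⊗[k] A →ₗ[k] A ⊗[k] B)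
    (φ : A ⊗[k] B →ₗ[k] B ⊗[k] A) (H : IsCrossBialgebra ψ φ)
    (S : A →ₗ[k] A) (s : B →ₗ[k] B)
    (hS1 : LinearMap.mul' k A ∘ₗ
        TensorProduct.map S (LinearMap.id : A →ₗ[k] A) ∘ₗ
        Coalgebra.comul (R := k) (A := A) =
      Algebra.linearMap k A ∘ₗ Coalgebra.counit (R := k) (A := A))
    (hS2 : LinearMap.mul' k A ∘ₗ
        TensorProduct.map (LinearMap.id : A →ₗ[k] A) S ∘ₗ
        Coalgebra.comul (R := k) (A := A) =
      Algebra.linearMap k A ∘ₗ Coalgebra.counit (R := k) (A := A))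
    (hs1 : LinearMap.mul' k B ∘ₗ
        TensorProduct.map s (LinearMap.id : B →ₗ[k] B) ∘ₗ
        Coalgebra.comul (R := k) (A := B) =
      Algebra.linearMap k B ∘ₗ Coalgebra.counit (R := k) (A := B))
    (hs2 : LinearMap.mul' k B ∘ₗ
        TensorProduct.map (LinearMap.id : B →ₗ[k] B) s ∘ₗ
        Coalgebra.comul (R := k) (A := B) =
      Algebra.linearMap k B ∘ₗ Coalgebra.counit (R := k) (A := B)) :
    (∀ h : A ⊗[k] B,
      crossMul ψ ((TensorProduct.map (ψ ∘ₗ TensorProduct.map s S ∘ₗ φ)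
          (LinearMap.id : A ⊗[k] B →ₗ[k] A ⊗[k] B)) (crossComul φ h)) =
        crossCounit (k := k) (A := A) (B := B) h • ((1 : A) ⊗ₜ[k] (1 : B))) ∧
    (∀ h : A ⊗[k] B,
      crossMul ψ ((TensorProduct.map (LinearMap.id : A ⊗[k] B →ₗ[k] A ⊗[k] B)
          (ψ ∘ₗ TensorProduct.map s S ∘ₗ φ)) (crossComul φ h)) =
        crossCounit (k := k) (A := A) (B := B) h • ((1 : A) ⊗ₜ[k] (1 : B))) := by
  obtain ⟨hmul_assoc, hone_mul, hmul_one, hcoassoc, hcounit_left, hcounit_right, -⟩ := H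
  have hψD := psiCondD_of_one_mul hone_mul
  have hψC := psiCondC_of_mul_one hmul_one
  have hφD := phiCondD_of_counit_left hcounit_left
  have hφC := phiCondC_of_counit_right hcounit_right
  have conv_assoc := convolution_assoc hmul_assoc hcoassoc
  have one_conv := convolution_unit_left hone_mul hcounit_left
  rw [← map_unitCounit_unitCounit] at one_conv
  have hSA := convolution_map_unitCounit_right hψD hφD S LinearMap.id
  have hAS := convolution_map_unitCounit_right hψD hφD LinearMap.id S
  have hsB := convolution_map_unitCounit_left hψC hφC s LinearMap.id
  have hBs := convolution_map_unitCounit_left hψC hφC LinearMap.id s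
  simp only [hS1, hS2, hs1, hs2] at hSA hAS hsB hBs
  have hanti := convolution_map_unitCounit_map_unitCounit (ψ := ψ) (φ := φ) s S
  have hid := convolution_map_id_unitCounit hψD hφD
  have left : convolution (crossMul ψ) (crossComul φ) (ψ ∘ₗ map s S ∘ₗ φ) LinearMap.id =
      LinearMap.toSpanSingleton k (A ⊗[k] B) ((1 : A) ⊗ₜ[k] (1 : B)) ∘ₗ crossCounit := by
    rw [← map_unitCounit_unitCounit, ← hanti, ← hid, conv_assoc, ← conv_assoc (map S _), hSA,
      one_conv, hsB]
  have right : convolution (crossMul ψ) (crossComul φ) LinearMap.id (ψ ∘ₗ map s S ∘ₗ φ) =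
      LinearMap.toSpanSingleton k (A ⊗[k] B) ((1 : A) ⊗ₜ[k] (1 : B)) ∘ₗ crossCounit := by
    rw [← map_unitCounit_unitCounit, ← hanti, ← hid, conv_assoc, ← conv_assoc (map _ LinearMap.id),
      hBs, one_conv, hAS]
  exact ⟨LinearMap.ext_iff.mp left, LinearMap.ext_iff.mp right⟩
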